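/- For non-negative integers a, b, c, ∑_{k=0}^{a} k·C(a+b,a+k)·C(b+c,b+k)·C(c+a,c+k) = (a·C(a+b,a)/2)·∑_{j=0}^{c-1} C(a+j,a)·C(b+j,b-1). -/

import Mathlib

open Finset

/-- Binomial coefficient with integer arguments, zero outside `0 ≤ k ≤ n`. -/
def C (n k : ℤ) : ℤ := if 0 ≤ k ∧ k ≤ n then (n.toNat.choose k.toNat : ℤ) else 0

lemma C_zero_of_gt {n k : ℤ} (h : n < k) : C n k = 0 := by
  simp only [C, if_neg (by omega : ¬ (0 ≤ k ∧ k ≤ n))]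

lemma C_zero_of_neg {n k : ℤ} (h : k < 0) : C n k = 0 := by
  simp only [C, if_neg (by omega : ¬ (0 ≤ k ∧ k ≤ n))]

lemma C_ofNat (n k : ℕ) : C n k = (n.choose k : ℤ) := by
  simp only [C]
  split_ifs with h
  · simp
  · have hk : n < k := by
      rcases not_and_or.mp h with h' | h'
      · exact absurd (Int.natCast_nonneg k) h'
      · exact_mod_cast not_le.mp h'
    rw [Nat.choose_eq_zero_of_lt hk]; simp

lemma C_zero_right (n : ℤ) (hn : 0 ≤ n) : C n 0 = 1 := by
  simp [C, hn]

lemma C_absorb1 (n k : ℤ) : k * C n k = n * C (n-1) (k-1) := by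
  rcases lt_or_ge k 0 with hk | hk
  · rw [C_zero_of_neg hk, C_zero_of_neg (by omega)]; ring
  rcases lt_or_ge n k with h | h
  · rw [C_zero_of_gt h, C_zero_of_gt (by omega)]; ring
  have hn : 0 ≤ n := le_trans hk h
  lift n to ℕ using hn
  lift k to ℕ using hk
  rcases Nat.eq_zero_or_pos k with rfl | hk1
  · simp only [Nat.cast_zero]
    rw [C_zero_of_neg (by norm_num : (0:ℤ) - 1 < 0)]; ring
  obtain ⟨m, rfl⟩ : ∃ m, n = m + 1 := ⟨n - 1, by omega⟩
  obtain ⟨j, rfl⟩ : ∃ j, k = j + 1 := ⟨k - 1, by omega⟩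
  rw [C_ofNat, show ((m+1:ℕ):ℤ) - 1 = ((m:ℕ):ℤ) from by push_cast; ring,
      show ((j+1:ℕ):ℤ) - 1 = ((j:ℕ):ℤ) from by push_cast; ring, C_ofNat]
  have h := Nat.add_one_mul_choose_eq m j
  have : (j+1) * ((m+1).choose (j+1)) = (m+1) * m.choose j := by
    rw [mul_comm]; omega
  exact_mod_cast this

lemma C_absorb2 (n k : ℤ) : (n - k) * C n k = n * C (n-1) k := by
  rcases lt_or_ge k 0 with hk | hk
  · rw [C_zero_of_neg hk, C_zero_of_neg hk]; ring
  rcases lt_or_ge n k with h | h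
  · rw [C_zero_of_gt h, C_zero_of_gt (by omega)]; ring
  rcases eq_or_lt_of_le h with rfl | hlt
  · rw [C_zero_of_gt (show k - 1 < k by omega)]; ring
  have hn : 0 ≤ n := le_trans hk h
  lift n to ℕ using hn
  lift k to ℕ using hk
  obtain ⟨m, rfl⟩ : ∃ m, n = m + 1 := ⟨n - 1, by omega⟩
  have hkm : k ≤ m := by exact_mod_cast Nat.lt_succ_iff.mp (by exact_mod_cast hlt)
  rw [C_ofNat, show ((m+1:ℕ):ℤ) - 1 = ((m:ℕ):ℤ) from by push_cast; ring, C_ofNat]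
  have hnat : (m+1) * m.choose k = (m+1).choose k * (m+1-k) := by
    rw [← Nat.choose_succ_right_eq, ← Nat.add_one_mul_choose_eq]
  have : (m+1-k) * ((m+1).choose k) = (m+1) * m.choose k := by
    rw [mul_comm]; omega
  rw [show ((m+1:ℕ):ℤ) - ((k:ℕ):ℤ) = ((m+1-k:ℕ):ℤ) from by omega]
  exact_mod_cast this

lemma C_pascal (n : ℤ) (hn : 0 ≤ n) (k : ℤ) : C (n+1) k = C n k + C n (k-1) := by
  rcases lt_or_ge k 0 with hk | hk
  · rw [C_zero_of_neg hk, C_zero_of_neg hk, C_zero_of_neg (by omega)]; ring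
  lift n to ℕ using hn
  lift k to ℕ using hk
  rcases Nat.eq_zero_or_pos k with rfl | hk1
  · simp only [Nat.cast_zero]
    rw [C_zero_of_neg (by norm_num : (0:ℤ) - 1 < 0),
        C_zero_right _ (by positivity), C_zero_right _ (by positivity)]
    ring
  obtain ⟨j, rfl⟩ : ∃ j, k = j + 1 := ⟨k - 1, by omega⟩
  rw [show ((j+1:ℕ):ℤ) - 1 = ((j:ℕ):ℤ) from by push_cast; ring,
      show ((n:ℕ):ℤ) + 1 = ((n+1:ℕ):ℤ) from by push_cast; ring, C_ofNat, C_ofNat, C_ofNat]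
  rw [Nat.choose_succ_succ]
  push_cast; ring

lemma key (a b c k : ℤ) (hq : 0 ≤ b + c) (hr : 0 ≤ c + a) :
    2*k * C (a+b) (a+k) * C (b+c+1) (b+k) * C (c+1+a) (c+1+k)
      - 2*k * C (a+b) (a+k) * C (b+c) (b+k) * C (c+a) (c+k)
    = (-(a+(k+1)) * C (a+b) (a+(k+1)) * C (b+c) (b+(k+1)-1) * C (c+a) (c+(k+1)))
      - (-(a+k) * C (a+b) (a+k) * C (b+c) (b+k-1) * C (c+a) (c+k)) := by
  have e1 := C_pascal (b+c) hq (b+k)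
  have e2 := C_pascal (c+a) hr (c+k+1)
  have e3 := C_absorb1 (a+b) (a+k+1)
  have e4 := C_absorb2 (a+b) (a+k)
  have e5 := C_absorb2 (c+a) (c+k)
  have e6 := C_absorb1 (c+a) (c+k+1)
  have e7 := C_absorb1 (b+c) (b+k)
  have e8 := C_absorb2 (b+c) (b+k-1)
  have hR : C (c+1+a) (c+1+k) = C (c+a+1) (c+k+1) := by ring_nf
  rw [hR]
  linear_combination (norm := ring_nf)
    (2*k * C (a+b) (a+k) * C (c+a+1) (c+k+1)) * e1
    + (2*k * C (a+b) (a+k) * (C (b+c) (b+k) + C (b+c) (b+k-1))) * e2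
    + (C (b+c) (b+k) * C (c+a) (c+k+1)) * e3
    - (C (b+c) (b+k) * C (c+a) (c+k+1)) * e4
    - (C (a+b) (a+k) * C (b+c) (b+k-1)) * e5
    + (C (a+b) (a+k) * C (b+c) (b+k-1)) * e6
    + (C (a+b) (a+k) * C (c+a) (c+k+1)) * e7
    - (C (a+b) (a+k) * C (c+a) (c+k+1)) * e8

theorem stmt_4 (a b c : ℕ) :
    ∑ k ∈ range (a + 1),
        (k : ℚ) * (C ((a : ℤ) + b) ((a : ℤ) + k) : ℚ) * (C ((b : ℤ) + c) ((b : ℤ) + k) : ℚ) *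
          (C ((c : ℤ) + a) ((c : ℤ) + k) : ℚ) =
      (a : ℚ) * (C ((a : ℤ) + b) a : ℚ) / 2 *
        ∑ j ∈ range c, (C ((a : ℤ) + j) a : ℚ) * (C ((b : ℤ) + j) ((b : ℤ) - 1) : ℚ) := by
  induction c with
  | zero =>
    simp only [Nat.cast_zero, range_zero, sum_empty, mul_zero]
    apply Finset.sum_eq_zero
    intro k hk
    rcases Nat.eq_zero_or_pos k with rfl | hk1
    · simp
    · rw [C_zero_of_gt (show (b:ℤ) + 0 < (b:ℤ) + k by
        have : (0:ℤ) < k := by exact_mod_cast hk1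
        omega)]
      simp
  | succ c ih =>
    -- the telescoped function
    have tel := Finset.sum_range_sub
      (fun j : ℕ => -((a:ℚ)+j) * (C ((a:ℤ)+b) ((a:ℤ)+j) : ℚ)
        * (C ((b:ℤ)+c) ((b:ℤ)+j-1) : ℚ) * (C ((c:ℤ)+a) ((c:ℤ)+j) : ℚ)) (a+1)
    simp only [Nat.cast_add, Nat.cast_one, Nat.cast_zero, add_zero] at tel
    have keyQ : ∀ k : ℕ,
        (k : ℚ) * (C ((a:ℤ) + b) ((a:ℤ) + k) : ℚ) * (C ((b:ℤ) + (c+1:ℕ)) ((b:ℤ) + k) : ℚ) *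
          (C (((c+1:ℕ):ℤ) + a) (((c+1:ℕ):ℤ) + k) : ℚ)
        = (k : ℚ) * (C ((a:ℤ) + b) ((a:ℤ) + k) : ℚ) * (C ((b:ℤ) + c) ((b:ℤ) + k) : ℚ) *
            (C ((c:ℤ) + a) ((c:ℤ) + k) : ℚ)
          + (-((a:ℚ)+((k:ℚ)+1)) * (C ((a:ℤ)+b) ((a:ℤ)+((k:ℤ)+1)) : ℚ)
              * (C ((b:ℤ)+c) ((b:ℤ)+((k:ℤ)+1)-1) : ℚ) * (C ((c:ℤ)+a) ((c:ℤ)+((k:ℤ)+1)) : ℚ)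
             - (-((a:ℚ)+k) * (C ((a:ℤ)+b) ((a:ℤ)+k) : ℚ)
              * (C ((b:ℤ)+c) ((b:ℤ)+k-1) : ℚ) * (C ((c:ℤ)+a) ((c:ℤ)+k) : ℚ))) / 2 := by
      intro k
      have h := key (a:ℤ) (b:ℤ) (c:ℤ) (k:ℤ) (by positivity) (by positivity)
      have h2 := congrArg (fun z : ℤ => (z : ℚ)) h
      push_cast at h2 ⊢
      linear_combination (norm := ring_nf) h2 / 2
    have hz : C ((c:ℤ)+a) ((c:ℤ)+((a:ℤ)+1)) = 0 := C_zero_of_gt (by omega)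
    rw [Finset.sum_congr rfl (fun k _ => keyQ k), Finset.sum_add_distrib, ih,
      ← Finset.sum_div, tel, hz, Finset.sum_range_succ, mul_add]
    have hsymm : C ((c:ℤ)+a) ((c:ℤ)) = C ((a:ℤ)+c) ((a:ℤ)) := by
      rw [show ((c:ℤ)+a) = ((c+a:ℕ):ℤ) from by push_cast; ring,
          show ((a:ℤ)+c) = ((a+c:ℕ):ℤ) from by push_cast; ring, C_ofNat, C_ofNat]
      rw [Nat.add_comm c a]
      congr 1
      rw [← Nat.choose_symm (Nat.le_add_right a c), Nat.add_sub_cancel_left]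
    rw [hsymm]
    ring
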